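/- arXiv:1604.08181 — 2 statements merged into one kernel-verified Lean document; each statement's English description precedes it below -/
import Mathlib

section
/- Let α ∈ (0,1] and let F : ℝ → ℝ be absolutely continuous (i.e. F(y)-F(x) = ∫_x^y f(t) dt for some locally integrable f). Suppose there is C > 0 such that |F(x+h+k) - F(x+k) - F(x+h) + F(x)| ≤ C·h·k^α for all x ∈ ℝ and all 0 < h ≤ k. Then F is continuously differentiable and F' is α-Hölder continuous with constant C. -/
open MeasureTheory Filter Topology

/-- Difference quotient. -/
noncomputable def Gq (F : ℝ → ℝ) (h x : ℝ) : ℝ := (F (x + h) - F x) / h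

lemma Gq_shift {α C : ℝ} (hα0 : 0 < α) {F : ℝ → ℝ} (hC : 0 < C)
    (hbound : ∀ x h k : ℝ, 0 < h → h ≤ k →
      |F (x + h + k) - F (x + k) - F (x + h) + F x| ≤ C * h * k ^ α)
    {h : ℝ} (hh : 0 < h) (x : ℝ) {t : ℝ} (ht : 0 ≤ t) :
    |Gq F h (x + t) - Gq F h x| ≤ C * (max t h) ^ α := by
  have hmax : (0:ℝ) < max t h := lt_max_of_lt_right hh
  have hrpow : (0:ℝ) ≤ (max t h) ^ α := Real.rpow_nonneg hmax.le α
  rcases eq_or_lt_of_le ht with rfl | ht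
  · simp only [add_zero, sub_self, abs_zero]
    positivity
  have hdiff : Gq F h (x + t) - Gq F h x
      = (F (x + t + h) - F (x + t) - F (x + h) + F x) / h := by
    unfold Gq; field_simp; ring
  rw [hdiff, abs_div, abs_of_pos hh, div_le_iff₀ hh]
  rcases le_total h t with hle | hle
  · rw [max_eq_left hle]
    have hb := hbound x h t hh hle
    calc |F (x + t + h) - F (x + t) - F (x + h) + F x|
        = |F (x + h + t) - F (x + t) - F (x + h) + F x| := by rw [show x + t + h = x + h + t by ring]
      _ ≤ C * h * t ^ α := hb
      _ = C * t ^ α * h := by ring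
  · rw [max_eq_right hle]
    have hb := hbound x t h ht hle
    have hpow : (0:ℝ) ≤ h ^ α := Real.rpow_nonneg hh.le α
    calc |F (x + t + h) - F (x + t) - F (x + h) + F x|
        = |F (x + t + h) - F (x + h) - F (x + t) + F x| := by congr 1; ring
      _ ≤ C * t * h ^ α := hb
      _ ≤ C * h ^ α * h := by nlinarith [mul_le_mul_of_nonneg_left hle (mul_nonneg hC.le hpow)]

lemma Gq_cauchy {α C : ℝ} (hα0 : 0 < α) {F : ℝ → ℝ} (hC : 0 < C) (hFc : Continuous F)
    (hbound : ∀ x h k : ℝ, 0 < h → h ≤ k →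
      |F (x + h + k) - F (x + k) - F (x + h) + F x| ≤ C * h * k ^ α)
    {h h' : ℝ} (hh' : 0 < h') (hle : h' ≤ h) (x : ℝ) :
    |Gq F h x - Gq F h' x| ≤ 2 * C * h ^ α := by
  have hh : 0 < h := hh'.trans_le hle
  set Φ : ℝ → ℝ := fun y => ∫ t in (0:ℝ)..y, F t with hΦ
  have hFi : ∀ a b : ℝ, IntervalIntegrable F volume a b := fun a b =>
    hFc.intervalIntegrable a b
  have hsplit : ∀ a b : ℝ, (∫ t in a..b, F t) = Φ b - Φ a := by
    intro a b
    have h1 := intervalIntegral.integral_add_adjacent_intervals (hFi 0 a) (hFi a b)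
    simp only [hΦ]
    linarith
  have hI : ∀ c b : ℝ, (∫ s in (0:ℝ)..b, F (c + s)) = Φ (c + b) - Φ c := by
    intro c b
    rw [intervalIntegral.integral_comp_add_left (fun u => F u) c, hsplit]
    norm_num
  have hGc : ∀ (a : ℝ), 0 < a → Continuous fun s : ℝ => Gq F a (x + s) := by
    intro a _
    unfold Gq
    fun_prop
  -- the two iterated averages agree
  have hAval : (∫ s in (0:ℝ)..h', Gq F h (x + s))
      = ((Φ (x + h + h') - Φ (x + h)) - (Φ (x + h') - Φ x)) / h := by
    unfold Gq
    rw [intervalIntegral.integral_div]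
    congr 1
    rw [intervalIntegral.integral_sub
      (Continuous.intervalIntegrable (by fun_prop) _ _)
      (Continuous.intervalIntegrable (by fun_prop) _ _)]
    have e1 : (∫ s in (0:ℝ)..h', F (x + s + h)) = Φ (x + h + h') - Φ (x + h) := by
      simp_rw [show ∀ s : ℝ, x + s + h = (x + h) + s from fun s => by ring]
      exact hI (x + h) h'
    have e2 : (∫ s in (0:ℝ)..h', F (x + s)) = Φ (x + h') - Φ x := hI x h'
    rw [e1, e2]
  have hBval : (∫ s in (0:ℝ)..h, Gq F h' (x + s))
      = ((Φ (x + h + h') - Φ (x + h)) - (Φ (x + h') - Φ x)) / h' := by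
    unfold Gq
    rw [intervalIntegral.integral_div]
    congr 1
    rw [intervalIntegral.integral_sub
      (Continuous.intervalIntegrable (by fun_prop) _ _)
      (Continuous.intervalIntegrable (by fun_prop) _ _)]
    have e1 : (∫ s in (0:ℝ)..h, F (x + s + h')) = Φ (x + h' + h) - Φ (x + h') := by
      simp_rw [show ∀ s : ℝ, x + s + h' = (x + h') + s from fun s => by ring]
      exact hI (x + h') h
    have e2 : (∫ s in (0:ℝ)..h, F (x + s)) = Φ (x + h) - Φ x := hI x h
    rw [e1, e2, show x + h' + h = x + h + h' by ring]
    ring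
  set E : ℝ := (Φ (x + h + h') - Φ (x + h)) - (Φ (x + h') - Φ x) with hE
  have hpow : (0:ℝ) ≤ h ^ α := Real.rpow_nonneg hh.le α
  -- first estimate : |Gq F h x - E/(h*h')| ≤ C * h^α
  have est1 : |Gq F h x - E / (h * h')| ≤ C * h ^ α := by
    have hint : (∫ s in (0:ℝ)..h', (Gq F h (x + s) - Gq F h x))
        = E / h - h' * Gq F h x := by
      rw [intervalIntegral.integral_sub ((hGc h hh).intervalIntegrable _ _)
        (intervalIntegrable_const), hAval]
      simp
    have hb : ‖∫ s in (0:ℝ)..h', (Gq F h (x + s) - Gq F h x)‖ ≤ C * h ^ α * |h' - 0| := by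
      apply intervalIntegral.norm_integral_le_of_norm_le_const
      intro s hs
      rw [Set.uIoc_of_le hh'.le] at hs
      have h1 : |Gq F h (x + s) - Gq F h x| ≤ C * (max s h) ^ α :=
        Gq_shift hα0 hC hbound hh x hs.1.le
      rwa [max_eq_right (hs.2.trans hle)] at h1
    rw [hint] at hb
    rw [Real.norm_eq_abs, sub_zero, abs_of_pos hh'] at hb
    have key : Gq F h x - E / (h * h') = -((E / h - h' * Gq F h x) / h') := by
      field_simp
      ring
    rw [key, abs_neg, abs_div, abs_of_pos hh', div_le_iff₀ hh']
    exact hb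
  -- second estimate : |E/(h*h') - Gq F h' x| ≤ C * h^α
  have est2 : |E / (h * h') - Gq F h' x| ≤ C * h ^ α := by
    have hint : (∫ s in (0:ℝ)..h, (Gq F h' (x + s) - Gq F h' x))
        = E / h' - h * Gq F h' x := by
      rw [intervalIntegral.integral_sub ((hGc h' hh').intervalIntegrable _ _)
        (intervalIntegrable_const), hBval]
      simp
    have hb : ‖∫ s in (0:ℝ)..h, (Gq F h' (x + s) - Gq F h' x)‖ ≤ C * h ^ α * |h - 0| := by
      apply intervalIntegral.norm_integral_le_of_norm_le_const
      intro s hs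
      rw [Set.uIoc_of_le hh.le] at hs
      have h1 : |Gq F h' (x + s) - Gq F h' x| ≤ C * (max s h') ^ α :=
        Gq_shift hα0 hC hbound hh' x hs.1.le
      calc |Gq F h' (x + s) - Gq F h' x| ≤ C * (max s h') ^ α := h1
        _ ≤ C * h ^ α := by
            apply mul_le_mul_of_nonneg_left _ hC.le
            apply Real.rpow_le_rpow (le_max_of_le_right hh'.le) (max_le hs.2 hle) hα0.le
    rw [hint] at hb
    rw [Real.norm_eq_abs, sub_zero, abs_of_pos hh] at hb
    have key : E / (h * h') - Gq F h' x = (E / h' - h * Gq F h' x) / h := by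
      field_simp
    rw [key, abs_div, abs_of_pos hh, div_le_iff₀ hh]
    exact hb
  calc |Gq F h x - Gq F h' x|
      ≤ |Gq F h x - E / (h * h')| + |E / (h * h') - Gq F h' x| := abs_sub_le _ _ _
    _ ≤ C * h ^ α + C * h ^ α := add_le_add est1 est2
    _ = 2 * C * h ^ α := by ring

/-- If F is absolutely continuous and its second differences satisfy
|F(x+h+k) - F(x+k) - F(x+h) + F(x)| ≤ C·h·k^α for 0 < h ≤ k, then F is continuously
differentiable with α-Hölder continuous derivative with the same constant C. -/
theorem holder_derivative_of_second_difference (α : ℝ) (hα : α ∈ Set.Ioc (0 : ℝ) 1)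
    (F : ℝ → ℝ)
    (habs : ∃ f : ℝ → ℝ, LocallyIntegrable f volume ∧
      ∀ x y : ℝ, x ≤ y → F y - F x = ∫ t in x..y, f t)
    (C : ℝ) (hC : 0 < C)
    (hbound : ∀ x h k : ℝ, 0 < h → h ≤ k →
      |F (x + h + k) - F (x + k) - F (x + h) + F x| ≤ C * h * k ^ α) :
    ContDiff ℝ 1 F ∧ ∀ u v : ℝ, |deriv F u - deriv F v| ≤ C * |u - v| ^ α := by
  obtain ⟨hα0, hα1⟩ := hα
  obtain ⟨f, hf_li, hFint⟩ := habs
  -- F is continuous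
  have hFall : ∀ y : ℝ, F y = F 0 + ∫ t in (0:ℝ)..y, f t := by
    intro y
    rcases le_total 0 y with hy | hy
    · have := hFint 0 y hy; linarith
    · have h1 := hFint y 0 hy
      have h2 : (∫ t in (0:ℝ)..y, f t) = -∫ t in y..(0:ℝ), f t :=
        intervalIntegral.integral_symm y 0
      linarith
  have hFc : Continuous F := by
    have h1 : Continuous fun y : ℝ => F 0 + ∫ t in (0:ℝ)..y, f t :=
      continuous_const.add (intervalIntegral.continuous_primitive
        (fun a b => (hf_li.integrableOn_isCompact isCompact_uIcc).intervalIntegrable) 0)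
    have h2 : F = fun y : ℝ => F 0 + ∫ t in (0:ℝ)..y, f t := funext hFall
    rw [h2]; exact h1
  -- the sequence of mesh sizes
  set us : ℕ → ℝ := fun n => 1 / (n + 1) with hus
  have huspos : ∀ n : ℕ, 0 < us n := fun n => by positivity
  have husmono : ∀ m n : ℕ, m ≤ n → us n ≤ us m := by
    intro m n hmn
    apply one_div_le_one_div_of_le (by positivity)
    have : (m : ℝ) ≤ n := Nat.cast_le.mpr hmn
    linarith
  have huslim : Tendsto us atTop (𝓝 0) := tendsto_one_div_add_atTop_nhds_zero_nat
  -- pointwise Cauchy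
  have hcau : ∀ x : ℝ, CauchySeq (fun n => Gq F (us n) x) := by
    intro x
    apply cauchySeq_of_le_tendsto_0 (fun N => 2 * C * (us N) ^ α)
    · intro n m N hn hm
      rw [Real.dist_eq]
      have key : ∀ a b : ℕ, N ≤ a → a ≤ b →
          |Gq F (us a) x - Gq F (us b) x| ≤ 2 * C * us N ^ α := by
        intro a b ha hab
        calc |Gq F (us a) x - Gq F (us b) x|
            ≤ 2 * C * (us a) ^ α :=
              Gq_cauchy hα0 hC hFc hbound (huspos b) (husmono a b hab) x
          _ ≤ 2 * C * (us N) ^ α := by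
              apply mul_le_mul_of_nonneg_left _ (by positivity)
              exact Real.rpow_le_rpow (huspos a).le (husmono N a ha) hα0.le
      rcases le_total n m with hnm | hmn
      · exact key n m hn hnm
      · rw [abs_sub_comm]; exact key m n hm hmn
    · have hc : ContinuousAt (fun r : ℝ => r ^ α) 0 :=
        Real.continuousAt_rpow_const 0 α (Or.inr hα0.le)
      have h1 : Tendsto (fun N => (us N) ^ α) atTop (𝓝 ((0:ℝ) ^ α)) :=
        (hc.tendsto).comp huslim
      rw [Real.zero_rpow hα0.ne'] at h1
      simpa using h1.const_mul (2 * C)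
  have hconv : ∀ x : ℝ, ∃ l, Tendsto (fun n => Gq F (us n) x) atTop (𝓝 l) := fun x =>
    cauchySeq_tendsto_of_complete (hcau x)
  choose g hg using hconv
  -- gap estimate
  have hgap : ∀ (x h : ℝ), 0 < h → |g x - Gq F h x| ≤ 2 * C * h ^ α := by
    intro x h hh
    have hev : ∀ᶠ n in atTop, |Gq F (us n) x - Gq F h x| ≤ 2 * C * h ^ α := by
      filter_upwards [huslim.eventually_lt_const hh] with n hn
      rw [abs_sub_comm]
      exact Gq_cauchy hα0 hC hFc hbound (huspos n) hn.le x
    have hlim : Tendsto (fun n => |Gq F (us n) x - Gq F h x|) atTop (𝓝 |g x - Gq F h x|) := by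
      rw [show |g x - Gq F h x| = |g x - Gq F h x| from rfl]
      exact (((hg x).sub_const _).abs)
    exact le_of_tendsto hlim hev
  -- Hölder estimate for g
  have hgHolder0 : ∀ x t : ℝ, 0 ≤ t → |g (x + t) - g x| ≤ C * t ^ α := by
    intro x t ht
    have h1 : ∀ n, |Gq F (us n) (x + t) - Gq F (us n) x| ≤ C * (max t (us n)) ^ α := fun n =>
      Gq_shift hα0 hC hbound (huspos n) x ht
    have hliml : Tendsto (fun n => |Gq F (us n) (x + t) - Gq F (us n) x|) atTop
        (𝓝 |g (x + t) - g x|) := ((hg (x + t)).sub (hg x)).abs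
    have hlimr : Tendsto (fun n => C * (max t (us n)) ^ α) atTop (𝓝 (C * t ^ α)) := by
      have hmax : Tendsto (fun n => max t (us n)) atTop (𝓝 t) := by
        have h2 := (tendsto_const_nhds (x := t) (f := atTop (α := ℕ))).max huslim
        rwa [max_eq_left ht] at h2
      have hc : ContinuousAt (fun r : ℝ => r ^ α) t :=
        Real.continuousAt_rpow_const t α (Or.inr hα0.le)
      exact ((hc.tendsto).comp hmax).const_mul C
    exact le_of_tendsto_of_tendsto' hliml hlimr h1
  have hgH : ∀ a b : ℝ, |g a - g b| ≤ C * |a - b| ^ α := by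
    intro a b
    rcases le_total b a with hba | hab
    · have h1 := hgHolder0 b (a - b) (by linarith)
      rw [show b + (a - b) = a by ring] at h1
      rwa [abs_of_nonneg (by linarith : (0:ℝ) ≤ a - b)]
    · have h1 := hgHolder0 a (b - a) (by linarith)
      rw [show a + (b - a) = b by ring] at h1
      rw [abs_sub_comm, abs_sub_comm a b]
      rwa [abs_of_nonneg (by linarith : (0:ℝ) ≤ b - a)]
  -- slope estimate
  have hslope : ∀ x h : ℝ, h ≠ 0 → |(F (x + h) - F x) / h - g x| ≤ 3 * C * |h| ^ α := by
    intro x h hne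
    rcases hne.lt_or_gt with hneg | hpos
    · set k : ℝ := -h with hk
      have hkpos : 0 < k := by rw [hk]; linarith
      have he : (F (x + h) - F x) / h = Gq F k (x + h) := by
        unfold Gq
        rw [show x + h + k = x by rw [hk]; ring, hk]
        rw [div_neg]
        ring_nf
      rw [he]
      have t1 : |Gq F k (x + h) - g (x + h)| ≤ 2 * C * k ^ α := by
        rw [abs_sub_comm]; exact hgap (x + h) k hkpos
      have t2 : |g (x + h) - g x| ≤ C * k ^ α := by
        have h1 := hgHolder0 (x + h) k hkpos.le
        rw [show x + h + k = x by rw [hk]; ring] at h1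
        rwa [abs_sub_comm] at h1
      have habsh : |h| = k := by rw [hk, abs_of_neg hneg]
      calc |Gq F k (x + h) - g x|
          ≤ |Gq F k (x + h) - g (x + h)| + |g (x + h) - g x| := abs_sub_le _ _ _
        _ ≤ 2 * C * k ^ α + C * k ^ α := add_le_add t1 t2
        _ = 3 * C * |h| ^ α := by rw [habsh]; ring
    · have he : (F (x + h) - F x) / h = Gq F h x := rfl
      rw [he, abs_sub_comm]
      have h1 := hgap x h hpos
      have hp : (0:ℝ) ≤ C * h ^ α := mul_nonneg hC.le (Real.rpow_nonneg hpos.le α)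
      rw [abs_of_pos hpos]
      linarith
  -- derivative
  have hderiv : ∀ x : ℝ, HasDerivAt F (g x) x := by
    intro x
    rw [hasDerivAt_iff_tendsto_slope]
    have hb : ∀ᶠ y in 𝓝[≠] x, ‖slope F x y - g x‖ ≤ 3 * C * |y - x| ^ α := by
      filter_upwards [self_mem_nhdsWithin] with y hy
      have hyx : y - x ≠ 0 := sub_ne_zero.mpr hy
      have h1 := hslope x (y - x) hyx
      rw [show x + (y - x) = y by ring] at h1
      rw [Real.norm_eq_abs, slope_def_field]
      exact h1
    have hlim0 : Tendsto (fun y => 3 * C * |y - x| ^ α) (𝓝[≠] x) (𝓝 0) := by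
      have h1 : Tendsto (fun y : ℝ => |y - x|) (𝓝[≠] x) (𝓝 0) := by
        have h2 : Tendsto (fun y : ℝ => |y - x|) (𝓝 x) (𝓝 |x - x|) :=
          ((continuous_id.sub continuous_const).abs).tendsto x
        simp only [sub_self, abs_zero] at h2
        exact h2.mono_left nhdsWithin_le_nhds
      have h2 : Tendsto (fun r : ℝ => 3 * C * r ^ α) (𝓝 0) (𝓝 0) := by
        have hc : ContinuousAt (fun r : ℝ => r ^ α) 0 :=
          Real.continuousAt_rpow_const 0 α (Or.inr hα0.le)
        have h3 := (hc.tendsto).const_mul (3 * C)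
        simpa [Real.zero_rpow hα0.ne'] using h3
      exact h2.comp h1
    have h4 : Tendsto (fun y => slope F x y - g x) (𝓝[≠] x) (𝓝 0) :=
      squeeze_zero_norm' hb hlim0
    exact tendsto_sub_nhds_zero_iff.mp h4
  have hgcont : Continuous g := by
    rw [continuous_iff_continuousAt]
    intro x
    have hb : ∀ᶠ y in 𝓝 x, ‖g y - g x‖ ≤ C * |y - x| ^ α :=
      Eventually.of_forall fun y => hgH y x
    have hlim0 : Tendsto (fun y => C * |y - x| ^ α) (𝓝 x) (𝓝 0) := by
      have h1 : Tendsto (fun y : ℝ => |y - x|) (𝓝 x) (𝓝 0) := by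
        have h2 : Tendsto (fun y : ℝ => |y - x|) (𝓝 x) (𝓝 |x - x|) :=
          ((continuous_id.sub continuous_const).abs).tendsto x
        simpa using h2
      have h2 : Tendsto (fun r : ℝ => C * r ^ α) (𝓝 0) (𝓝 0) := by
        have hc : ContinuousAt (fun r : ℝ => r ^ α) 0 :=
          Real.continuousAt_rpow_const 0 α (Or.inr hα0.le)
        have h3 := (hc.tendsto).const_mul C
        simpa [Real.zero_rpow hα0.ne'] using h3
      exact h2.comp h1
    have h4 : Tendsto (fun y => g y - g x) (𝓝 x) (𝓝 0) := squeeze_zero_norm' hb hlim0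
    exact tendsto_sub_nhds_zero_iff.mp h4
  have hdF : deriv F = g := funext fun x => (hderiv x).deriv
  constructor
  · rw [contDiff_one_iff_deriv]
    exact ⟨fun x => (hderiv x).differentiableAt, by rw [hdF]; exact hgcont⟩
  · intro u v
    rw [hdF]
    exact hgH u v
end

section
/- Let Z be normal with mean μ and standard deviation σ > 0, let 0 < h ≤ k and α ∈ (0,1]. Then |P(Z + x ∈ [k, k+h]) − P(Z + x ∈ [0, h])| ≤ h k^α / (√(2π e^α) σ^{1+α}) for all x ∈ ℝ. -/
open MeasureTheory ProbabilityTheory Real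

noncomputable def stdPhi (u : ℝ) : ℝ := (Real.sqrt (2 * π))⁻¹ * Real.exp (-u ^ 2 / 2)

lemma stdPhi_hasDerivAt (u : ℝ) : HasDerivAt stdPhi (-u * stdPhi u) u := by
  have h1 : HasDerivAt (fun u : ℝ => -u ^ 2 / 2) (-u) u := by
    have := (((hasDerivAt_pow 2 u).neg).div_const 2)
    simpa [neg_div] using this
  have h2 := (h1.exp).const_mul (Real.sqrt (2 * π))⁻¹
  refine h2.congr_deriv ?_
  simp only [stdPhi]; ring

lemma stdPhi_pos (u : ℝ) : 0 < stdPhi u := by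
  have h2π : 0 < Real.sqrt (2 * π) := Real.sqrt_pos.2 (by positivity)
  exact mul_pos (inv_pos.2 h2π) (Real.exp_pos _)

lemma stdPhi_le (u : ℝ) : stdPhi u ≤ (Real.sqrt (2 * π))⁻¹ := by
  have h2π : 0 < Real.sqrt (2 * π) := Real.sqrt_pos.2 (by positivity)
  have : Real.exp (-u ^ 2 / 2) ≤ 1 := Real.exp_le_one_iff.2 (by nlinarith [sq_nonneg u])
  calc stdPhi u ≤ (Real.sqrt (2 * π))⁻¹ * 1 := by
        exact mul_le_mul_of_nonneg_left this (by positivity)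
    _ = _ := mul_one _

lemma stdPhi_deriv_bound (u : ℝ) : ‖-u * stdPhi u‖ ≤ Real.exp (-(1:ℝ)/2) * (Real.sqrt (2 * π))⁻¹ := by
  have h2π : 0 < Real.sqrt (2 * π) := Real.sqrt_pos.2 (by positivity)
  have habs : |u| ≤ Real.exp ((u ^ 2 - 1) / 2) := by
    have h1 : (u ^ 2 - 1) / 2 + 1 ≤ Real.exp ((u ^ 2 - 1) / 2) := Real.add_one_le_exp _
    nlinarith [sq_nonneg (|u| - 1), sq_abs u]
  have : ‖-u * stdPhi u‖ = |u| * Real.exp (-u ^ 2 / 2) * (Real.sqrt (2 * π))⁻¹ := by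
    rw [norm_eq_abs, abs_mul, abs_neg, stdPhi, abs_mul, abs_of_pos (Real.exp_pos _),
      abs_of_pos (inv_pos.2 h2π)]
    ring
  rw [this]
  have key : |u| * Real.exp (-u ^ 2 / 2) ≤ Real.exp (-(1:ℝ)/2) := by
    calc |u| * Real.exp (-u ^ 2 / 2) ≤ Real.exp ((u ^ 2 - 1) / 2) * Real.exp (-u ^ 2 / 2) :=
          mul_le_mul_of_nonneg_right habs (Real.exp_pos _).le
      _ = Real.exp (-(1:ℝ)/2) := by rw [← Real.exp_add]; ring_nf
  exact mul_le_mul_of_nonneg_right key (by positivity)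

lemma stdPhi_lip (u v : ℝ) :
    |stdPhi u - stdPhi v| ≤ Real.exp (-(1:ℝ)/2) * (Real.sqrt (2 * π))⁻¹ * |u - v| := by
  have := (convex_univ (𝕜 := ℝ)).norm_image_sub_le_of_norm_hasDerivWithin_le
    (f := stdPhi) (f' := fun w => -w * stdPhi w)
    (fun w _ => (stdPhi_hasDerivAt w).hasDerivWithinAt)
    (fun w _ => stdPhi_deriv_bound w) (Set.mem_univ v) (Set.mem_univ u)
  simpa [Real.norm_eq_abs] using this


lemma stdPhi_holder {α : ℝ} (hα0 : 0 < α) (hα1 : α ≤ 1) (u v : ℝ) :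
    |stdPhi u - stdPhi v| ≤ |u - v| ^ α * (Real.exp (-(α/2)) * (Real.sqrt (2 * π))⁻¹) := by
  set A : ℝ := (Real.sqrt (2 * π))⁻¹ with hA
  have hA0 : 0 < A := inv_pos.2 (Real.sqrt_pos.2 (by positivity))
  set L : ℝ := Real.exp (-(1:ℝ)/2) * A with hL
  have hL0 : 0 < L := mul_pos (Real.exp_pos _) hA0
  set d : ℝ := |stdPhi u - stdPhi v| with hd
  have hd0 : 0 ≤ d := abs_nonneg _
  have hdA : d ≤ A := by
    rw [hd, abs_sub_le_iff]
    constructor <;> nlinarith [stdPhi_pos u, stdPhi_pos v, stdPhi_le u, stdPhi_le v]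
  have hdL : d ≤ L * |u - v| := stdPhi_lip u v
  rcases eq_or_lt_of_le hd0 with h0 | h0
  · rw [← h0]; positivity
  · have hsplit : d = d ^ (1 - α) * d ^ α := by
      rw [← Real.rpow_add h0]; simp
    rw [hsplit]
    have h1 : d ^ (1 - α) ≤ A ^ (1 - α) :=
      Real.rpow_le_rpow hd0 hdA (by linarith)
    have h2 : d ^ α ≤ (L * |u - v|) ^ α :=
      Real.rpow_le_rpow hd0 hdL hα0.le
    calc d ^ (1 - α) * d ^ α ≤ A ^ (1 - α) * (L * |u - v|) ^ α := by
          apply mul_le_mul h1 h2 (Real.rpow_nonneg hd0 _) (Real.rpow_nonneg hA0.le _)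
      _ = |u - v| ^ α * (Real.exp (-(α/2)) * A) := by
          rw [Real.mul_rpow hL0.le (abs_nonneg _), hL,
            Real.mul_rpow (Real.exp_pos _).le hA0.le, ← Real.exp_mul]
          have hAA : A ^ (1 - α) * A ^ α = A := by
            rw [← Real.rpow_add hA0]; simp
          have : -(1:ℝ)/2 * α = -(α/2) := by ring
          rw [this]
          linear_combination Real.exp (-(α/2)) * |u - v| ^ α * hAA

lemma gaussianPDFReal_eq_stdPhi {σ : ℝ} (hσ : 0 < σ) (μ y : ℝ) :
    gaussianPDFReal μ (Real.toNNReal (σ ^ 2)) y = σ⁻¹ * stdPhi ((y - μ) / σ) := by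
  rw [gaussianPDFReal, stdPhi]
  have hv : ((Real.toNNReal (σ ^ 2)) : ℝ) = σ ^ 2 := Real.coe_toNNReal _ (by positivity)
  rw [hv]
  have h1 : Real.sqrt (2 * π * σ ^ 2) = Real.sqrt (2 * π) * σ := by
    rw [Real.sqrt_mul (by positivity), Real.sqrt_sq hσ.le]
  rw [h1]
  have h2 : -(y - μ) ^ 2 / (2 * σ ^ 2) = -((y - μ) / σ) ^ 2 / 2 := by
    field_simp
  rw [h2, mul_inv]
  ring

/-- Normal estimate: |P(Z + x ∈ [k,k+h]) − P(Z + x ∈ [0,h])| ≤ hk^α/(√(2πe^α) σ^{1+α}). -/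
theorem N_bound (μ σ : ℝ) (hσ : 0 < σ) (h k : ℝ) (hh : 0 < h) (hk : h ≤ k)
    (α : ℝ) (hα : α ∈ Set.Ioc (0 : ℝ) 1) (x : ℝ) :
    |((gaussianReal μ (Real.toNNReal (σ ^ 2))) (Set.Icc (k - x) (k + h - x))).toReal -
      ((gaussianReal μ (Real.toNNReal (σ ^ 2))) (Set.Icc (0 - x) (h - x))).toReal| ≤
      h * k ^ α / (Real.sqrt (2 * π * Real.exp α) * σ ^ (1 + α)) := by
  obtain ⟨hα0, hα1⟩ := hα
  have hk0 : 0 < k := lt_of_lt_of_le hh hk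
  set v : NNReal := Real.toNNReal (σ ^ 2) with hvdef
  have hv : v ≠ 0 := by
    simp only [hvdef, ne_eq, Real.toNNReal_eq_zero, not_le]
    positivity
  set f : ℝ → ℝ := gaussianPDFReal μ v with hfdef
  have hint : Integrable f := integrable_gaussianPDFReal μ v
  -- express measures as interval integrals
  have meas_eq : ∀ a b : ℝ, a ≤ b →
      ((gaussianReal μ v) (Set.Icc a b)).toReal = ∫ y in a..b, f y := by
    intro a b hab
    rw [gaussianReal_apply_eq_integral μ hv,
      ENNReal.toReal_ofReal (integral_nonneg (gaussianPDFReal_nonneg μ v)),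
      MeasureTheory.integral_Icc_eq_integral_Ioc, ← intervalIntegral.integral_of_le hab]
  rw [meas_eq _ _ (by linarith), meas_eq _ _ (by linarith)]
  -- translate both integrals to [0, h]
  have t1 : (∫ y in (k - x)..(k + h - x), f y) = ∫ t in (0:ℝ)..h, f (t + (k - x)) := by
    rw [intervalIntegral.integral_comp_add_right]
    norm_num
    ring_nf
  have t2 : (∫ y in (0 - x)..(h - x), f y) = ∫ t in (0:ℝ)..h, f (t + (0 - x)) := by
    rw [intervalIntegral.integral_comp_add_right]
    norm_num
    ring_nf
  rw [t1, t2, ← intervalIntegral.integral_sub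
    ((hint.comp_add_right (k - x)).intervalIntegrable)
    ((hint.comp_add_right (0 - x)).intervalIntegrable)]
  -- pointwise bound
  set C : ℝ := σ⁻¹ * ((k / σ) ^ α * (Real.exp (-(α/2)) * (Real.sqrt (2 * π))⁻¹)) with hC
  have hbound : ∀ t ∈ Set.uIoc (0:ℝ) h, ‖f (t + (k - x)) - f (t + (0 - x))‖ ≤ C := by
    intro t _
    rw [hfdef, gaussianPDFReal_eq_stdPhi hσ, gaussianPDFReal_eq_stdPhi hσ,
      ← mul_sub, Real.norm_eq_abs, abs_mul, abs_of_pos (inv_pos.2 hσ)]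
    have harg : |(t + (k - x) - μ) / σ - (t + (0 - x) - μ) / σ| = k / σ := by
      rw [div_sub_div_same]
      have : t + (k - x) - μ - (t + (0 - x) - μ) = k := by ring
      rw [this, abs_of_pos (by positivity)]
    have := stdPhi_holder hα0 hα1 ((t + (k - x) - μ) / σ) ((t + (0 - x) - μ) / σ)
    rw [harg] at this
    rw [hC]
    exact mul_le_mul_of_nonneg_left this (by positivity)
  have habs := intervalIntegral.norm_integral_le_of_norm_le_const hbound
  rw [Real.norm_eq_abs] at habs
  refine le_trans habs (le_of_eq ?_)
  -- arithmetic: |h - 0| * C = RHS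
  rw [abs_of_pos (by linarith : (0:ℝ) < h - 0), hC]
  rw [Real.div_rpow hk0.le hσ.le, Real.rpow_add hσ, Real.rpow_one,
    Real.sqrt_mul (by positivity) (Real.exp α), ← Real.exp_half, Real.exp_neg]
  have h2π : 0 < Real.sqrt (2 * π) := Real.sqrt_pos.2 (by positivity)
  have hσα : 0 < σ ^ α := Real.rpow_pos_of_pos hσ α
  have hkα : 0 < k ^ α := Real.rpow_pos_of_pos hk0 α
  have hexp : 0 < Real.exp (α/2) := Real.exp_pos _
  field_simp
  ring
end
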